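/- arXiv:2108.08687 — 4 statements merged into one kernel-verified Lean document; each statement's English description precedes it below -/
import Mathlib

section
/- Let X be a finite set and w : X × X → ℝ a symmetric weight function with nonnegative values, zero diagonal, and all degrees d(x) = Σ_{z≠x} w(x,z) strictly positive. Fix x ∈ X and define, for x ≠ y, Q^rw_α(x,y) = w_α(x,y) / Σ_{z≠x} w_α(x,z) where w_α(x,y) = w(x,y)/(d(x)^α d(y)^α). Suppose y satisfies w(x,y) > 0 and there exists z with w(x,z) > 0 and d(z) > d(y). Then Q^rw_α(x,y) → 0 as α → −∞. -/
open Finset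

/-- If `y` is a neighbor of `x` and `x` has some neighbor `z` of strictly larger
degree than `y`, then the diffusion-map transition probability
`Q^rw_α(x,y) = w_α(x,y)/Σ_{z≠x} w_α(x,z)` tends to `0` as `α → -∞`. -/
theorem stmt_1 {X : Type*} [Fintype X] [DecidableEq X]
    (w : X → X → ℝ)
    (hsymm : ∀ x y, w x y = w y x)
    (hnonneg : ∀ x y, 0 ≤ w x y)
    (hdiag : ∀ x, w x x = 0)
    (d : X → ℝ)
    (hd : ∀ x, d x = ∑ z ∈ univ.filter (· ≠ x), w x z)
    (hdpos : ∀ x, 0 < d x)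
    (wα : ℝ → X → X → ℝ)
    (hwα : ∀ α x y, wα α x y = w x y / (d x ^ α * d y ^ α))
    (x y : X) (hxy : x ≠ y)
    (hwxy : 0 < w x y)
    (hbigger : ∃ z, 0 < w x z ∧ d y < d z) :
    Filter.Tendsto
      (fun α : ℝ => wα α x y / ∑ z ∈ univ.filter (· ≠ x), wα α x z)
      Filter.atBot (nhds 0) := by
  obtain ⟨z, hwz, hdz⟩ := hbigger
  have hzx : z ≠ x := by
    intro h; rw [h, hdiag] at hwz; exact lt_irrefl 0 hwz
  have hwαpos : ∀ α (a b : X), 0 < w a b → 0 < wα α a b := by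
    intro α a b h
    rw [hwα]
    exact div_pos h (mul_pos (Real.rpow_pos_of_pos (hdpos a) α)
      (Real.rpow_pos_of_pos (hdpos b) α))
  have hwαnonneg : ∀ α (a b : X), 0 ≤ wα α a b := by
    intro α a b
    rw [hwα]
    exact div_nonneg (hnonneg a b) (le_of_lt (mul_pos
      (Real.rpow_pos_of_pos (hdpos a) α) (Real.rpow_pos_of_pos (hdpos b) α)))
  set S : ℝ → ℝ := fun α => ∑ u ∈ univ.filter (· ≠ x), wα α x u with hS
  have hSge : ∀ α, wα α x z ≤ S α := by
    intro α
    exact Finset.single_le_sum (fun u _ => hwαnonneg α x u)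
      (by simp [hzx])
  -- upper bound
  have hub : ∀ α, wα α x y / S α ≤ (w x y / w x z) * (d z / d y) ^ α := by
    intro α
    have h1 : wα α x y / S α ≤ wα α x y / wα α x z :=
      div_le_div_of_nonneg_left (hwαnonneg α x y) (hwαpos α x z hwz) (hSge α)
    have h2 : wα α x y / wα α x z = (w x y / w x z) * (d z / d y) ^ α := by
      rw [hwα, hwα, Real.div_rpow (le_of_lt (hdpos z)) (le_of_lt (hdpos y))]
      have hy := (Real.rpow_pos_of_pos (hdpos y) α).ne'
      have hz' := (Real.rpow_pos_of_pos (hdpos z) α).ne'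
      have hx' := (Real.rpow_pos_of_pos (hdpos x) α).ne'
      field_simp
    rw [← h2]; exact h1
  have hlb : ∀ α, 0 ≤ wα α x y / S α := by
    intro α
    exact div_nonneg (hwαnonneg α x y)
      (Finset.sum_nonneg fun u _ => hwαnonneg α x u)
  -- the upper bound tends to 0
  have hr : 1 < d z / d y := (one_lt_div (hdpos y)).mpr hdz
  have htend : Filter.Tendsto (fun α : ℝ => (w x y / w x z) * (d z / d y) ^ α)
      Filter.atBot (nhds 0) := by
    have hb : Filter.Tendsto (fun α : ℝ => (d z / d y) ^ α) Filter.atBot (nhds 0) := by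
      have hbpos : (0:ℝ) < d z / d y := lt_trans one_pos hr
      have hlog : (0:ℝ) < Real.log (d z / d y) := Real.log_pos hr
      have : (fun α : ℝ => (d z / d y) ^ α)
          = fun α : ℝ => Real.exp (Real.log (d z / d y) * α) := by
        funext α; rw [Real.rpow_def_of_pos hbpos]
      rw [this]
      exact Real.tendsto_exp_atBot.comp
        (Filter.tendsto_atBot_atBot.mpr (fun b => ⟨b / Real.log (d z / d y),
          fun a ha => by
            rw [mul_comm]
            exact (le_div_iff₀ hlog).mp ha⟩))
    have := hb.const_mul (w x y / w x z)
    simpa using this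
  exact squeeze_zero hlb hub htend
end

section
/- Let X be a finite set and w : X × X → ℝ a symmetric weight function with nonnegative values, zero diagonal, and all degrees d(x) = Σ_{z≠x} w(x,z) strictly positive. Fix x ∈ X with at least one neighbor and let M_x = { y : w(x,y) > 0 and d(y) = max{ d(z) : w(x,z) > 0 } } be the set of neighbors of x of maximal degree. If y ∈ M_x, then, with Q^rw_α(x,y) = w_α(x,y)/Σ_{z≠x} w_α(x,z) and w_α(x,y) = w(x,y)/(d(x)^α d(y)^α), one has Q^rw_α(x,y) → w(x,y) / Σ_{z∈M_x} w(x,z) as α → −∞. -/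
open Finset

/-- If `y` is a neighbor of `x` of maximal degree among the neighbors of `x`,
then `Q^rw_α(x,y) = w_α(x,y)/Σ_{z≠x} w_α(x,z)` tends to
`w(x,y)/Σ_{z ∈ M_x} w(x,z)` as `α → -∞`, where `M_x` is the set of neighbors of
`x` of maximal degree. -/
theorem stmt_2 {X : Type*} [Fintype X] [DecidableEq X]
    (w : X → X → ℝ)
    (hsymm : ∀ x y, w x y = w y x)
    (hnonneg : ∀ x y, 0 ≤ w x y)
    (hdiag : ∀ x, w x x = 0)
    (d : X → ℝ)
    (hd : ∀ x, d x = ∑ z ∈ univ.filter (· ≠ x), w x z)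
    (hdpos : ∀ x, 0 < d x)
    (wα : ℝ → X → X → ℝ)
    (hwα : ∀ α x y, wα α x y = w x y / (d x ^ α * d y ^ α))
    (x : X) (hneighbor : ∃ z, 0 < w x z)
    (M : Finset X)
    (hM : ∀ y, y ∈ M ↔ 0 < w x y ∧ ∀ z, 0 < w x z → d z ≤ d y)
    (y : X) (hy : y ∈ M) :
    Filter.Tendsto
      (fun α : ℝ => wα α x y / ∑ z ∈ univ.filter (· ≠ x), wα α x z)
      Filter.atBot (nhds (w x y / ∑ z ∈ M, w x z)) := by
  obtain ⟨hwy, hymax⟩ := (hM y).mp hy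
  set f : ℝ → X → ℝ := fun α z => w x z * (d y / d z) ^ α with hf
  -- rewrite the quotient using f
  have key : ∀ α : ℝ, wα α x y / ∑ z ∈ univ.filter (· ≠ x), wα α x z
      = f α y / ∑ z ∈ univ.filter (· ≠ x), f α z := by
    intro α
    have hc : (0:ℝ) < d x ^ α * d y ^ α := by
      have h1 := Real.rpow_pos_of_pos (hdpos x) α
      have h2 := Real.rpow_pos_of_pos (hdpos y) α
      positivity
    have hfz : ∀ z, f α z = wα α x z * (d x ^ α * d y ^ α) := by
      intro z
      rw [hwα]
      simp only [hf]
      rw [Real.div_rpow (hdpos y).le (hdpos z).le]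
      have hxα := (Real.rpow_pos_of_pos (hdpos x) α).ne'
      have hzα := (Real.rpow_pos_of_pos (hdpos z) α).ne'
      field_simp
    rw [hfz y, Finset.sum_congr rfl fun z _ => hfz z, ← Finset.sum_mul,
      mul_div_mul_right _ _ hc.ne']
  simp only [key]
  -- limits of f
  have hlim : ∀ z, z ≠ x → Filter.Tendsto (fun α => f α z) Filter.atBot
      (nhds (if z ∈ M then w x z else 0)) := by
    intro z hz
    by_cases hwz : 0 < w x z
    · by_cases hdz : d z = d y
      · have hzM : z ∈ M := (hM z).mpr ⟨hwz, fun u hu => hdz ▸ hymax u hu⟩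
        simp only [hf, hzM, if_pos, hdz, div_self (hdpos y).ne', Real.one_rpow, mul_one]
        exact tendsto_const_nhds
      · have hzM : z ∉ M := fun hmem =>
          hdz (le_antisymm (hymax z hwz) (((hM z).mp hmem).2 y hwy))
        have hlt : d z < d y := lt_of_le_of_ne (hymax z hwz) hdz
        have hb : 1 < d y / d z := (one_lt_div (hdpos z)).mpr hlt
        simp only [hf, hzM, if_neg, not_false_iff]
        have := (tendsto_rpow_atBot_of_base_gt_one _ hb).const_mul (w x z)
        simpa using this
    · have hw0 : w x z = 0 := le_antisymm (not_lt.mp hwz) (hnonneg x z)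
      have hzM : z ∉ M := fun hmem => hwz ((hM z).mp hmem).1
      simp only [hf, hw0, zero_mul, hzM, if_neg, not_false_iff]
      exact tendsto_const_nhds
  have hsum : Filter.Tendsto (fun α => ∑ z ∈ univ.filter (· ≠ x), f α z) Filter.atBot
      (nhds (∑ z ∈ univ.filter (· ≠ x), if z ∈ M then w x z else 0)) :=
    tendsto_finset_sum _ fun z hz => hlim z (by simpa using hz)
  have hMsub : ∀ z ∈ M, z ∈ univ.filter (· ≠ x) := by
    intro z hz
    simp only [mem_filter, mem_univ, true_and]
    intro h
    subst h
    exact (lt_irrefl 0 : ¬ (0:ℝ) < 0) (by simpa [hdiag] using ((hM z).mp hz).1)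
  have hsumval : (∑ z ∈ univ.filter (· ≠ x), if z ∈ M then w x z else 0)
      = ∑ z ∈ M, w x z := by
    rw [Finset.sum_ite_mem]
    congr 1
    rw [Finset.inter_eq_right.mpr hMsub]
  rw [hsumval] at hsum
  have hspos : 0 < ∑ z ∈ M, w x z :=
    Finset.sum_pos' (fun z _ => hnonneg x z) ⟨y, hy, hwy⟩
  have hnum : Filter.Tendsto (fun α => f α y) Filter.atBot (nhds (w x y)) := by
    have := hlim y (by rintro rfl; simp [hdiag] at hwy)
    simpa [hy] using this
  exact hnum.div hsum hspos.ne'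
end

section
/- (Diffusion maps converge to graph mean shift as α → −∞.) Let X be a finite set and w : X × X → ℝ a symmetric weight function with nonnegative values and zero diagonal such that every vertex has at least one neighbor and all degrees d(x) = Σ_{z≠x} w(x,z) are strictly positive. For α ∈ ℝ define Q^rw_α(x,y) = w_α(x,y)/Σ_{z≠x} w_α(x,z) for x ≠ y and Q^rw_α(x,x) = −1, where w_α(x,y) = w(x,y)/(d(x)^α d(y)^α). Then entrywise lim_{α→−∞} Q^rw_α = Q^rw_{−∞}, where Q^rw_{−∞}(x,x) = −1, Q^rw_{−∞}(x,y) = w(x,y)/Σ_{z∈M_x} w(x,z) if y ∈ M_x, and Q^rw_{−∞}(x,y) = 0 otherwise, with M_x the set of neighbors y of x (w(x,y)>0) whose degree d(y) is maximal among all neighbors of x. -/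
open Finset

/-- Diffusion maps converge to graph mean shift as `α → -∞`: the reweighted
random-walk rate matrices `Q^rw_α` converge entrywise to the KNF-type graph
mean shift rate matrix `Q^rw_{-∞}`. -/
theorem stmt_3 {X : Type*} [Fintype X] [DecidableEq X]
    (w : X → X → ℝ)
    (hsymm : ∀ x y, w x y = w y x)
    (hnonneg : ∀ x y, 0 ≤ w x y)
    (hdiag : ∀ x, w x x = 0)
    (hneighbor : ∀ x, ∃ z, 0 < w x z)
    (d : X → ℝ)
    (hd : ∀ x, d x = ∑ z ∈ univ.filter (· ≠ x), w x z)
    (hdpos : ∀ x, 0 < d x)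
    (wα : ℝ → X → X → ℝ)
    (hwα : ∀ α x y, wα α x y = w x y / (d x ^ α * d y ^ α))
    (Q : ℝ → X → X → ℝ)
    (hQ : ∀ α x y, Q α x y =
      if x = y then -1 else wα α x y / ∑ z ∈ univ.filter (· ≠ x), wα α x z)
    (M : X → Finset X)
    (hM : ∀ x y, y ∈ M x ↔ 0 < w x y ∧ ∀ z, 0 < w x z → d z ≤ d y)
    (Qinf : X → X → ℝ)
    (hQinf : ∀ x y, Qinf x y =
      if x = y then -1
      else if y ∈ M x then w x y / ∑ z ∈ M x, w x z else 0) :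
    ∀ x y : X,
      Filter.Tendsto (fun α : ℝ => Q α x y) Filter.atBot (nhds (Qinf x y)) := by
  intro x y
  by_cases hxy : x = y
  · subst hxy
    simp only [hQ, if_pos rfl, hQinf, if_pos rfl]
    exact tendsto_const_nhds
  -- `M x` is nonempty
  obtain ⟨z0, hz0⟩ := hneighbor x
  have hMne : (M x).Nonempty := by
    obtain ⟨y0, hy0mem, hy0max⟩ := Finset.exists_max_image
      (univ.filter fun z => 0 < w x z) d ⟨z0, by simp [hz0]⟩
    exact ⟨y0, (hM x y0).2 ⟨(Finset.mem_filter.1 hy0mem).2,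
      fun z hz => hy0max z (by simp [hz])⟩⟩
  obtain ⟨y0, hy0⟩ := hMne
  have hy0' := (hM x y0).1 hy0
  set D := d y0 with hD
  have hDpos : 0 < D := hdpos y0
  have hle : ∀ z, 0 < w x z → d z ≤ D := hy0'.2
  have hmem_iff : ∀ z, z ∈ M x ↔ 0 < w x z ∧ d z = D := by
    intro z; rw [hM]
    constructor
    · rintro ⟨h1, h2⟩; exact ⟨h1, le_antisymm (hle z h1) (h2 y0 hy0'.1)⟩
    · rintro ⟨h1, h2⟩; exact ⟨h1, fun u hu => by rw [h2]; exact hle u hu⟩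
  -- limit of each term
  have hterm : ∀ z, Filter.Tendsto (fun α : ℝ => w x z * (d z / D) ^ (-α))
      Filter.atBot (nhds (if z ∈ M x then w x z else 0)) := by
    intro z
    by_cases hmz : z ∈ M x
    · rw [if_pos hmz]
      have hdz : d z / D = 1 := by
        have h := ((hmem_iff z).1 hmz).2
        rw [h]; field_simp
      simp only [hdz, Real.one_rpow, mul_one]
      exact tendsto_const_nhds
    · rw [if_neg hmz]
      by_cases hwz : w x z = 0
      · simp only [hwz, zero_mul]
        exact tendsto_const_nhds
      · have hwpos : 0 < w x z := (hnonneg x z).lt_of_ne (Ne.symm hwz)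
        have hlt : d z < D := lt_of_le_of_ne (hle z hwpos)
          (fun h => hmz ((hmem_iff z).2 ⟨hwpos, h⟩))
        have h0 : (0:ℝ) < d z / D := div_pos (hdpos z) hDpos
        have h1 : d z / D < 1 := (div_lt_one hDpos).2 hlt
        have hrt : Filter.Tendsto (fun t : ℝ => (d z / D) ^ t)
            Filter.atTop (nhds 0) :=
          tendsto_rpow_atTop_of_base_lt_one _ (by linarith) h1
        have := (hrt.comp Filter.tendsto_neg_atBot_atTop).const_mul (w x z)
        simpa [Function.comp, mul_zero] using this
  -- denominator limit
  have hMsub : M x ⊆ univ.filter (· ≠ x) := by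
    intro z hz
    have hzpos := ((hM x z).1 hz).1
    refine Finset.mem_filter.2 ⟨Finset.mem_univ _, ?_⟩
    intro h; rw [h, hdiag] at hzpos; exact lt_irrefl _ hzpos
  have hsumval : ∑ z ∈ univ.filter (· ≠ x), (if z ∈ M x then w x z else 0)
      = ∑ z ∈ M x, w x z := by
    rw [Finset.sum_ite_mem, Finset.inter_eq_right.2 hMsub]
  have hsum : Filter.Tendsto
      (fun α : ℝ => ∑ z ∈ univ.filter (· ≠ x), w x z * (d z / D) ^ (-α))
      Filter.atBot (nhds (∑ z ∈ M x, w x z)) := by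
    rw [← hsumval]
    exact tendsto_finset_sum _ (fun z _ => hterm z)
  have hSpos : 0 < ∑ z ∈ M x, w x z :=
    Finset.sum_pos (fun z hz => ((hM x z).1 hz).1) ⟨y0, hy0⟩
  -- rewrite Q
  have hQeq : ∀ α : ℝ, Q α x y = (w x y * (d y / D) ^ (-α)) /
      (∑ z ∈ univ.filter (· ≠ x), w x z * (d z / D) ^ (-α)) := by
    intro α
    rw [hQ, if_neg hxy]
    have hc : (0:ℝ) < D ^ (-α) * (d x) ^ (-α) :=
      mul_pos (Real.rpow_pos_of_pos hDpos _) (Real.rpow_pos_of_pos (hdpos x) _)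
    have key : ∀ z, wα α x z = w x z * (d z / D) ^ (-α) * (D ^ (-α) * d x ^ (-α)) := by
      intro z
      rw [hwα, Real.div_rpow (hdpos z).le hDpos.le,
        Real.rpow_neg (hdpos z).le, Real.rpow_neg hDpos.le, Real.rpow_neg (hdpos x).le]
      have h1 : (d x : ℝ) ^ α ≠ 0 := (Real.rpow_pos_of_pos (hdpos x) α).ne'
      have h2 : (d z : ℝ) ^ α ≠ 0 := (Real.rpow_pos_of_pos (hdpos z) α).ne'
      have h3 : (D : ℝ) ^ α ≠ 0 := (Real.rpow_pos_of_pos hDpos α).ne'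
      field_simp
    simp only [key]
    rw [← Finset.sum_mul, mul_div_mul_right _ _ (ne_of_gt hc)]
  have hQinfval : Qinf x y = (if y ∈ M x then w x y else 0) / ∑ z ∈ M x, w x z := by
    rw [hQinf, if_neg hxy]
    by_cases hym : y ∈ M x
    · rw [if_pos hym, if_pos hym]
    · rw [if_neg hym, if_neg hym, zero_div]
  rw [hQinfval]
  simp only [hQeq]
  exact (hterm y).div hsum (ne_of_gt hSpos)
end

section
/- (Energy dissipation along graph mean shift dynamics.) Let X be a finite set, w : X × X → ℝ a symmetric weight function with nonnegative values and zero diagonal, and B : X → ℝ. Define the transition rate matrix Q^B by Q^B(x,y) = (B(y) − B(x))₊ w(x,y) for x ≠ y and Q^B(x,x) = −Σ_{z≠x} (B(z) − B(x))₊ w(x,z). Let u⁰ ∈ ℝ^X have nonnegative entries and set u_t = u⁰ e^{tQ^B}. Then for every t ≥ 0, d/dt Σ_y B(y) u_t(y) = Σ_x u_t(x) Σ_{y≠x} ((B(y) − B(x))₊)² w(x,y) ≥ 0; in particular the energy Ê(u_t) = −Σ_y B(y) u_t(y) is nonincreasing in t on [0,∞). -/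
open Finset Matrix

private lemma pow_entry_nonneg {X : Type*} [Fintype X] [DecidableEq X]
    (N : Matrix X X ℝ) (hN : ∀ x y, 0 ≤ N x y) :
    ∀ (n : ℕ) (x y : X), 0 ≤ (N ^ n) x y := by
  intro n
  induction n with
  | zero =>
    intro x y
    simp only [pow_zero, Matrix.one_apply]
    split <;> norm_num
  | succ n ih =>
    intro x y
    rw [pow_succ, Matrix.mul_apply]
    exact Finset.sum_nonneg fun z _ => mul_nonneg (ih x z) (hN z y)

private lemma exp_entry_nonneg {X : Type*} [Fintype X] [DecidableEq X]
    (N : Matrix X X ℝ) (hN : ∀ x y, 0 ≤ N x y) (x y : X) :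
    0 ≤ NormedSpace.exp N x y := by
  letI : SeminormedRing (Matrix X X ℝ) := Matrix.linftyOpSemiNormedRing
  letI : NormedRing (Matrix X X ℝ) := Matrix.linftyOpNormedRing
  letI : NormedAlgebra ℝ (Matrix X X ℝ) := Matrix.linftyOpNormedAlgebra
  let L : Matrix X X ℝ →ₗ[ℝ] ℝ :=
    (LinearMap.proj (R := ℝ) (φ := fun _ : X => ℝ) y).comp
      (LinearMap.proj (R := ℝ) (φ := fun _ : X => X → ℝ) x)
  have hL : Continuous L := LinearMap.continuous_of_finiteDimensional L
  have hs : Summable (fun n : ℕ => (Nat.factorial n : ℝ)⁻¹ • N ^ n) := NormedSpace.expSeries_summable' N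
  have hmap : L (∑' n : ℕ, (Nat.factorial n : ℝ)⁻¹ • N ^ n) = ∑' n : ℕ, L ((Nat.factorial n : ℝ)⁻¹ • N ^ n) :=
    ((hs.hasSum.map L.toAddMonoidHom hL).tsum_eq).symm
  rw [NormedSpace.exp_eq_tsum ℝ]
  show 0 ≤ L (∑' n : ℕ, (Nat.factorial n : ℝ)⁻¹ • N ^ n)
  rw [hmap]
  refine tsum_nonneg fun n => ?_
  show 0 ≤ (Nat.factorial n : ℝ)⁻¹ * (N ^ n) x y
  exact mul_nonneg (by positivity) (pow_entry_nonneg N hN n x y)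

private lemma exp_entry_hasDerivAt {X : Type*} [Fintype X] [DecidableEq X]
    (A : Matrix X X ℝ) (t : ℝ) (x y : X) :
    HasDerivAt (fun s : ℝ => NormedSpace.exp (s • A) x y)
      ((NormedSpace.exp (t • A) * A) x y) t := by
  letI : SeminormedRing (Matrix X X ℝ) := Matrix.linftyOpSemiNormedRing
  letI : NormedRing (Matrix X X ℝ) := Matrix.linftyOpNormedRing
  letI : NormedAlgebra ℝ (Matrix X X ℝ) := Matrix.linftyOpNormedAlgebra
  have hD : HasDerivAt (fun s : ℝ => NormedSpace.exp (s • A))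
      (NormedSpace.exp (t • A) * A) t := hasDerivAt_exp_smul_const A t
  let L : Matrix X X ℝ →ₗ[ℝ] ℝ :=
    (LinearMap.proj (R := ℝ) (φ := fun _ : X => ℝ) y).comp
      (LinearMap.proj (R := ℝ) (φ := fun _ : X => X → ℝ) x)
  have h := (LinearMap.toContinuousLinearMap L).hasFDerivAt.comp_hasDerivAt t hD
  exact h

private lemma exp_rate_nonneg {X : Type*} [Fintype X] [DecidableEq X]
    (Q : Matrix X X ℝ) (hoff : ∀ x y, x ≠ y → 0 ≤ Q x y)
    {t : ℝ} (ht : 0 ≤ t) (x y : X) : 0 ≤ NormedSpace.exp (t • Q) x y := by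
  classical
  set c : ℝ := ∑ z, |Q z z| with hc
  have hcz : ∀ z, -Q z z ≤ c := by
    intro z
    rw [hc]
    exact le_trans (neg_le_abs _)
      (Finset.single_le_sum (f := fun i => |Q i i|) (fun i _ => abs_nonneg _) (Finset.mem_univ z))
  set N : Matrix X X ℝ := t • Q + (t * c) • (1 : Matrix X X ℝ) with hNdef
  have hN : ∀ a b, 0 ≤ N a b := by
    intro a b
    by_cases hab : a = b
    · subst hab
      have : N a a = t * Q a a + t * c := by
        simp [hNdef, Matrix.add_apply, Matrix.smul_apply, Matrix.one_apply]
      rw [this, ← mul_add]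
      have : 0 ≤ Q a a + c := by linarith [hcz a]
      exact mul_nonneg ht this
    · have : N a b = t * Q a b := by
        simp [hNdef, Matrix.add_apply, Matrix.smul_apply, Matrix.one_apply_ne hab]
      rw [this]
      exact mul_nonneg ht (hoff a b hab)
  have hsplit : t • Q = N + (-(t * c)) • (1 : Matrix X X ℝ) := by
    rw [hNdef]; module
  have hcomm : Commute N ((-(t * c)) • (1 : Matrix X X ℝ)) :=
    (Commute.one_right N).smul_right _
  rw [hsplit, Matrix.exp_add_of_commute N _ hcomm, Matrix.smul_one_eq_diagonal,
    Matrix.exp_diagonal, Matrix.mul_diagonal]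
  refine mul_nonneg (exp_entry_nonneg N hN x y) ?_
  have : NormedSpace.exp (fun _ : X => -(t * c)) y = Real.exp (-(t * c)) := by
    rw [Pi.coe_exp, Real.exp_eq_exp_ℝ]
  rw [this]
  exact (Real.exp_pos _).le

/-- Energy dissipation along graph mean shift dynamics: for the rate matrix
`Q^B` of the graph gradient flow of the potential `B` and a nonnegative initial
datum, `t ↦ Σ_y B(y) u_t(y)` has nonnegative derivative
`Σ_x u_t(x) Σ_{y≠x} ((B(y)-B(x))₊)² w(x,y)`, so the energy
`Ê(u_t) = -Σ_y B(y) u_t(y)` is nonincreasing on `[0,∞)`. -/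
theorem stmt_10 {X : Type*} [Fintype X] [DecidableEq X]
    (w : X → X → ℝ)
    (hsymm : ∀ x y, w x y = w y x)
    (hnonneg : ∀ x y, 0 ≤ w x y)
    (hdiag : ∀ x, w x x = 0)
    (B : X → ℝ)
    (QB : Matrix X X ℝ)
    (hQBoff : ∀ x y, x ≠ y → QB x y = max (B y - B x) 0 * w x y)
    (hQBdiag : ∀ x, QB x x = -∑ z ∈ univ.filter (· ≠ x), max (B z - B x) 0 * w x z)
    (u0 : X → ℝ) (hu0 : ∀ x, 0 ≤ u0 x)
    (u : ℝ → X → ℝ)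
    (hu : ∀ t y, u t y = ∑ x, u0 x * NormedSpace.exp (t • QB) x y) :
    (∀ t : ℝ, 0 ≤ t →
        HasDerivAt (fun s : ℝ => ∑ y, B y * u s y)
          (∑ x, u t x * ∑ y ∈ univ.filter (· ≠ x), (max (B y - B x) 0) ^ 2 * w x y) t
        ∧ 0 ≤ ∑ x, u t x * ∑ y ∈ univ.filter (· ≠ x), (max (B y - B x) 0) ^ 2 * w x y)
      ∧ AntitoneOn (fun t : ℝ => -∑ y, B y * u t y) (Set.Ici 0) := by
  classical
  have hmax : ∀ a : ℝ, max a 0 * a = max a 0 ^ 2 := by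
    intro a
    rcases le_total a 0 with h | h
    · simp [max_eq_right h]
    · rw [max_eq_left h]; ring
  -- key pointwise identity
  have key : ∀ z, (∑ y, B y * QB z y)
      = ∑ y ∈ univ.filter (· ≠ z), (max (B y - B z) 0) ^ 2 * w z y := by
    intro z
    have h1 : (univ.filter (· ≠ z) : Finset X) = univ.erase z := Finset.filter_ne' _ _
    rw [h1, ← Finset.add_sum_erase _ _ (Finset.mem_univ z), hQBdiag z, h1]
    have h2 : ∀ y ∈ univ.erase z, B y * QB z y = B y * (max (B y - B z) 0 * w z y) := by
      intro y hy
      rw [hQBoff z y (fun h => (Finset.mem_erase.mp hy).1 h.symm)]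
    rw [Finset.sum_congr rfl h2, mul_neg, Finset.mul_sum, neg_add_eq_sub,
      ← Finset.sum_sub_distrib]
    refine Finset.sum_congr rfl fun y hy => ?_
    linear_combination (w z y) * hmax (B y - B z)
  -- derivative at every time
  have hder : ∀ t : ℝ, HasDerivAt (fun s : ℝ => ∑ y, B y * u s y)
      (∑ x, u t x * ∑ y ∈ univ.filter (· ≠ x), (max (B y - B x) 0) ^ 2 * w x y) t := by
    intro t
    have hfun : (fun s : ℝ => ∑ y, B y * u s y)
        = fun s : ℝ => ∑ y, B y * ∑ x, u0 x * NormedSpace.exp (s • QB) x y := by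
      funext s; simp_rw [hu]
    have h1 : HasDerivAt (fun s : ℝ => ∑ y, B y * ∑ x, u0 x * NormedSpace.exp (s • QB) x y)
        (∑ y, B y * ∑ x, u0 x * (NormedSpace.exp (t • QB) * QB) x y) t := by
      refine HasDerivAt.fun_sum fun y _ => HasDerivAt.const_mul _ ?_
      exact HasDerivAt.fun_sum fun x _ => (exp_entry_hasDerivAt QB t x y).const_mul _
    have step : ∀ y, B y * ∑ x, u0 x * (NormedSpace.exp (t • QB) * QB) x y
        = ∑ z, ((∑ x, u0 x * NormedSpace.exp (t • QB) x z) * QB z y) * B y := by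
      intro y
      simp_rw [Matrix.mul_apply, Finset.mul_sum, Finset.sum_mul]
      rw [Finset.sum_comm]
      exact Finset.sum_congr rfl fun z _ => Finset.sum_congr rfl fun x _ => by ring
    have h2 : (∑ y, B y * ∑ x, u0 x * (NormedSpace.exp (t • QB) * QB) x y)
        = ∑ x, u t x * ∑ y ∈ univ.filter (· ≠ x), (max (B y - B x) 0) ^ 2 * w x y := by
      calc ∑ y, B y * ∑ x, u0 x * (NormedSpace.exp (t • QB) * QB) x y
          = ∑ y, ∑ z, ((∑ x, u0 x * NormedSpace.exp (t • QB) x z) * QB z y) * B y :=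
            Finset.sum_congr rfl fun y _ => step y
        _ = ∑ z, ∑ y, ((∑ x, u0 x * NormedSpace.exp (t • QB) x z) * QB z y) * B y :=
            Finset.sum_comm
        _ = ∑ z, u t z * ∑ y, B y * QB z y := by
            refine Finset.sum_congr rfl fun z _ => ?_
            rw [hu t z, Finset.mul_sum]
            exact Finset.sum_congr rfl fun y _ => by ring
        _ = ∑ x, u t x * ∑ y ∈ univ.filter (· ≠ x), (max (B y - B x) 0) ^ 2 * w x y :=
            Finset.sum_congr rfl fun z _ => by rw [key z]
    rw [hfun]
    exact h2 ▸ h1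
  -- nonnegativity
  have hoff : ∀ x y, x ≠ y → 0 ≤ QB x y := fun x y h => by
    rw [hQBoff x y h]; exact mul_nonneg (le_max_right _ _) (hnonneg x y)
  have hu_nonneg : ∀ t : ℝ, 0 ≤ t → ∀ x, 0 ≤ u t x := by
    intro t ht x
    rw [hu]
    exact Finset.sum_nonneg fun x' _ =>
      mul_nonneg (hu0 x') (exp_rate_nonneg QB hoff ht x' x)
  have hDpos : ∀ t : ℝ, 0 ≤ t →
      0 ≤ ∑ x, u t x * ∑ y ∈ univ.filter (· ≠ x), (max (B y - B x) 0) ^ 2 * w x y := by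
    intro t ht
    refine Finset.sum_nonneg fun x _ => mul_nonneg (hu_nonneg t ht x) ?_
    exact Finset.sum_nonneg fun y _ => mul_nonneg (sq_nonneg _) (hnonneg x y)
  refine ⟨fun t ht => ⟨hder t, hDpos t ht⟩, ?_⟩
  have hdiff : Differentiable ℝ (fun t : ℝ => -∑ y, B y * u t y) :=
    fun t => ((hder t).neg).differentiableAt
  refine antitoneOn_of_deriv_nonpos (convex_Ici 0) hdiff.continuous.continuousOn
    (hdiff.differentiableOn) ?_
  intro x hx
  rw [interior_Ici] at hx
  rw [show (fun t : ℝ => -∑ y, B y * u t y) = -(fun s => ∑ y, B y * u s y) from rfl,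
    ((hder x).neg).deriv]
  exact neg_nonpos.mpr (hDpos x hx.le)
end
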